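/- Let (G,j,π,u) be a (ū,Δ)-sectioned iterated extension of (KNP) by (PQR). Then the map sending d ∈ Z^2(R,Z(K)^P) to the isomorphism class of the (ū,Δ)-sectioned iterated extension (d⊠G,j,π,u) is a well-defined bijection from Z^2(R,Z(K)^P) onto the set of isomorphism classes of (ū,Δ)-sectioned iterated extensions of (KNP) by (PQR); its inverse sends the class of (G',j',π',u') to the 2-cocycle (r₁,r₂) ↦ f'(r₁,r₂)·f(r₁,r₂)⁻¹ (an element of N lying in i₀(Z(K)^P)), where f and f' are the left factor sets of u and u' (u(r₁)·u(r₂) = j(f(r₁,r₂))·u(r₁r₂), and similarly for f'). -/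

import Mathlib

namespace IES

section OutDef

variable (K : Type*) [Group K]

/-- The subgroup of inner automorphisms of `K` inside `MulAut K`. -/
def Inn : Subgroup (MulAut K) := (MulAut.conj : K →* MulAut K).range

instance : (Inn K).Normal := by
  constructor
  rintro x ⟨k, rfl⟩ η
  refine ⟨η k, ?_⟩
  ext y
  simp [MulAut.conj_apply, MulAut.mul_apply, map_mul, map_inv]

/-- The outer automorphism group `Out K := Aut K / Inn K`. -/
abbrev Out := MulAut K ⧸ Inn K

/-- Canonical projection `Aut K → Out K`. -/
def toOut : MulAut K →* Out K := QuotientGroup.mk' (Inn K)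

lemma center_map (η : K ≃* K) {z : K} (hz : z ∈ Subgroup.center K) :
    η z ∈ Subgroup.center K := by
  rw [Subgroup.mem_center_iff] at hz ⊢
  intro g
  calc g * η z = η (η.symm g * z) := by rw [map_mul, η.apply_symm_apply]
    _ = η (z * η.symm g) := by rw [hz (η.symm g)]
    _ = η z * g := by rw [map_mul, η.apply_symm_apply]

/-- Restriction of automorphisms of `K` to its center. -/
def centerAut : MulAut K →* MulAut (Subgroup.center K) where
  toFun η :=
    { toFun := fun z => ⟨η z.1, center_map K η z.2⟩
      invFun := fun z => ⟨η.symm z.1, center_map K η.symm z.2⟩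
      left_inv := fun z => Subtype.ext (η.symm_apply_apply z.1)
      right_inv := fun z => Subtype.ext (η.apply_symm_apply z.1)
      map_mul' := fun a b => Subtype.ext (map_mul η a.1 b.1) }
  map_one' := by ext z; rfl
  map_mul' := fun a b => by ext z; rfl

lemma centerAut_inn : ∀ x ∈ Inn K, centerAut K x = 1 := by
  rintro x ⟨k, rfl⟩
  ext z
  have hz := z.2
  rw [Subgroup.mem_center_iff] at hz
  show k * z.1 * k⁻¹ = z.1
  rw [hz k, mul_inv_cancel_right]

/-- The action of `Out K` on the center of `K`. -/
def outCenter : Out K →* MulAut (Subgroup.center K) :=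
  QuotientGroup.lift (Inn K) (centerAut K) (centerAut_inn K)

end OutDef

section ModK

variable {K N : Type*} [Group K] [Group N]

/-- The group of automorphisms of `N` stabilizing the image of `K`. -/
def autK (i0 : K →* N) : Subgroup (MulAut N) where
  carrier := {η | ∀ n, η n ∈ i0.range ↔ n ∈ i0.range}
  one_mem' := by intro n; rw [MulAut.one_apply]
  mul_mem' := by
    intro a b ha hb n
    rw [MulAut.mul_apply]
    exact (ha (b n)).trans (hb n)
  inv_mem' := by
    intro a ha n
    have h := ha (a⁻¹ n)
    rw [MulAut.apply_inv_self] at h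
    exact h.symm

lemma mem_autK_iff {i0 : K →* N} {η : MulAut N} :
    η ∈ autK i0 ↔ ∀ n, η n ∈ i0.range ↔ n ∈ i0.range := Iff.rfl

/-- The subgroup of `autK i0` of inner automorphisms induced by elements of `i0 K`. -/
def cInn (i0 : K →* N) : Subgroup (autK i0) where
  carrier := {η | ∃ k : K, (η : MulAut N) = MulAut.conj (i0 k)}
  one_mem' := ⟨1, by simp⟩
  mul_mem' := by
    rintro a b ⟨k1, h1⟩ ⟨k2, h2⟩
    exact ⟨k1 * k2, by rw [Subgroup.coe_mul, h1, h2, ← map_mul, ← map_mul]⟩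
  inv_mem' := by
    rintro a ⟨k, h⟩
    exact ⟨k⁻¹, by rw [Subgroup.coe_inv, h, ← map_inv, ← map_inv]⟩

lemma conj_conj_eq (η : MulAut N) (x : N) :
    η * MulAut.conj x * η⁻¹ = MulAut.conj (η x) := by
  ext y
  simp [MulAut.conj_apply, MulAut.mul_apply, map_mul, map_inv]

instance (i0 : K →* N) : (cInn i0).Normal := by
  constructor
  rintro c ⟨k, hk⟩ g
  obtain ⟨k', hk'⟩ := (g.2 (i0 k)).mpr ⟨k, rfl⟩
  refine ⟨k', ?_⟩
  rw [Subgroup.coe_mul, Subgroup.coe_mul, Subgroup.coe_inv, hk, conj_conj_eq, hk']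

/-- The mod-`K` outer automorphism group `Out(N;K)`. -/
abbrev OutNK (i0 : K →* N) := ↥(autK i0) ⧸ cInn i0

/-- Canonical projection onto the mod-`K` outer automorphism group. -/
def mkNK (i0 : K →* N) : ↥(autK i0) →* OutNK i0 := QuotientGroup.mk' (cInn i0)

end ModK


section Cocycles

variable {K P Q R : Type*} [Group K] [Group P] [Group Q] [Group R]

/-- Normalized 1-cocycles of `Q` with values in `Z(K)`, for the action induced by `θ`. -/
def IsZ1Q (θ : Q →* Out K) (lam : Q → ↥(Subgroup.center K)) : Prop :=
  lam 1 = 1 ∧ ∀ q1 q2 : Q, lam (q1 * q2) = lam q1 * outCenter K (θ q1) (lam q2)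

/-- Normalized 1-cocycles of `P` with values in `Z(K)`, for the action induced by `θ ∘ j̄`. -/
def IsZ1P (θ : Q →* Out K) (jb : P →* Q) (lam : P → ↥(Subgroup.center K)) : Prop :=
  lam 1 = 1 ∧ ∀ p1 p2 : P, lam (p1 * p2) = lam p1 * outCenter K (θ (jb p1)) (lam p2)

/-- Normalized 1-cocycles of `R` with values in `Z(K)^P`, where the action `θ₀` of `R`
is expressed via arbitrary `φ̄`-preimages in `Q`. -/
def IsZ1R (θ : Q →* Out K) (jb : P →* Q) (fb : Q →* R)
    (lam : R → ↥(Subgroup.center K)) : Prop :=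
  lam 1 = 1 ∧
  (∀ (r : R) (p : P), outCenter K (θ (jb p)) (lam r) = lam r) ∧
  ∀ q1 q2 : Q, lam (fb q1 * fb q2) = lam (fb q1) * outCenter K (θ q1) (lam (fb q2))

/-- Normalized 2-cocycles of `R` with values in `Z(K)^P`. -/
def IsZ2R (θ : Q →* Out K) (jb : P →* Q) (fb : Q →* R)
    (d : R → R → ↥(Subgroup.center K)) : Prop :=
  (∀ r : R, d 1 r = 1 ∧ d r 1 = 1) ∧
  (∀ (r1 r2 : R) (p : P), outCenter K (θ (jb p)) (d r1 r2) = d r1 r2) ∧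
  ∀ (q1 : Q) (r2 r3 : R),
    d (fb q1) r2 * d (fb q1 * r2) r3 = outCenter K (θ q1) (d r2 r3) * d (fb q1) (r2 * r3)

/-- The cohomology class of a 1-cocycle of `P` is fixed by the `R`-action. -/
def RFixed (θ : Q →* Out K) (jb : P →* Q) (lam : P → ↥(Subgroup.center K)) : Prop :=
  ∀ q : Q, ∃ z0 : ↥(Subgroup.center K), ∀ p p' : P,
    jb p' = q⁻¹ * jb p * q →
      outCenter K (θ q) (lam p') = z0⁻¹ * outCenter K (θ (jb p)) z0 * lam p

end Cocycles

/-- The twisted multiplication `m_d` on `G` associated with a 2-cochain `d`. -/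
def mD {K Q R N G : Type*} [Group K] [Group Q] [Group R] [Group N] [Group G]
    (i0 : K →* N) (j : N →* G) (π : G →* Q) (fb : Q →* R)
    (d : R → R → ↥(Subgroup.center K)) (g1 g2 : G) : G :=
  (j.comp i0) (d (fb (π g1)) (fb (π g2)) : K) * g1 * g2

/-!
Every element of a sectioned extension `G` is uniquely `j n * u r`, and in these coordinates
`(j n₁ u r₁)(j n₂ u r₂) = j (n₁ · Δ_{r₁}(n₂) · f(r₁,r₂)) u (r₁ r₂)`. Two sectioned extensions
share `j`, `u` and `Δ`, so they differ only through their factor sets. The quotient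
`c = f' f⁻¹` is central in `N`, because `f` and `f'` both induce the automorphism
`Δ_{r₁} Δ_{r₂} Δ_{r₁r₂}⁻¹`; it lies in `K`, because `f` and `f'` have the same image
`ū(r₁)ū(r₂)ū(r₁r₂)⁻¹` in `Q`; it is fixed by `P`, which acts through conjugation in `N`; and
comparing the cocycle identities of `f` and `f'` shows that it is a 2-cocycle. Twisting the
product of `G` by `c` turns the factor set `f` into `f'`, so matching coordinates is an
isomorphism onto `G'`. Conversely, an isomorphism of twists fixing `j` and `u` fixes
`u r₁ * u r₂ ∈ j(N) u(r₁r₂)`, so comparing the twisted products of `u r₁` and `u r₂` recovers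
the cocycle.
-/

open Function

section FactorSets

variable {N G R : Type*} [Group N] [Group G] [Group R] {j : N →* G} {u : R → G}
  {δ : R → MulAut N} {f : R → R → N}

lemma factorSet_one_left (hj : Injective j) (hu1 : u 1 = 1)
    (hf : ∀ r1 r2, u r1 * u r2 = j (f r1 r2) * u (r1 * r2)) (r : R) : f 1 r = 1 :=
  hj <| mul_right_cancel (b := u r) (by simpa [hu1] using (hf 1 r).symm)

lemma factorSet_one_right (hj : Injective j) (hu1 : u 1 = 1)
    (hf : ∀ r1 r2, u r1 * u r2 = j (f r1 r2) * u (r1 * r2)) (r : R) : f r 1 = 1 :=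
  hj <| mul_right_cancel (b := u r) (by simpa [hu1] using (hf r 1).symm)

variable (hconj : ∀ r n, j (δ r n) = u r * j n * (u r)⁻¹)
  (hf : ∀ r1 r2, u r1 * u r2 = j (f r1 r2) * u (r1 * r2))
include hconj hf

lemma mul_section_mul_section (n1 n2 : N) (r1 r2 : R) :
    j n1 * u r1 * (j n2 * u r2) = j (n1 * δ r1 n2 * f r1 r2) * u (r1 * r2) := by
  rw [map_mul, map_mul, hconj, mul_assoc _ (j (f r1 r2)), ← hf]
  group

lemma conj_factorSet (hj : Injective j) (r1 r2 : R) :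
    MulAut.conj (f r1 r2) = δ r1 * δ r2 * (δ (r1 * r2))⁻¹ := by
  ext n
  apply hj
  have hinv : j ((δ (r1 * r2))⁻¹ n) = (u (r1 * r2))⁻¹ * j n * u (r1 * r2) := by
    have h := hconj (r1 * r2) ((δ (r1 * r2))⁻¹ n)
    rw [MulAut.apply_inv_self] at h
    rw [h]
    group
  simp only [MulAut.conj_apply, MulAut.mul_apply, map_mul, map_inv, hconj, hinv,
    eq_mul_inv_of_mul_eq (hf r1 r2).symm]
  group

lemma factorSet_cocycle (hj : Injective j) (r1 r2 r3 : R) :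
    f r1 r2 * f (r1 * r2) r3 = δ r1 (f r2 r3) * f r1 (r2 * r3) := by
  have key : j (f r1 r2 * f (r1 * r2) r3) * u (r1 * r2 * r3)
      = j (δ r1 (f r2 r3) * f r1 (r2 * r3)) * u (r1 * (r2 * r3)) :=
    calc j (f r1 r2 * f (r1 * r2) r3) * u (r1 * r2 * r3) = u r1 * u r2 * u r3 := by
          rw [map_mul, mul_assoc, ← hf, ← mul_assoc, ← hf]
      _ = u r1 * (u r2 * u r3) := mul_assoc _ _ _
      _ = j (δ r1 (f r2 r3) * f r1 (r2 * r3)) * u (r1 * (r2 * r3)) := by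
          rw [map_mul, mul_assoc, ← hf, hconj, hf r2 r3]
          group
  rw [mul_assoc r1] at key
  exact hj (mul_right_cancel key)

end FactorSets

lemma mul_inv_mem_center_of_conj_eq {N : Type*} [Group N] {a b : N}
    (h : MulAut.conj a = MulAut.conj b) : a * b⁻¹ ∈ Subgroup.center N := by
  rw [Subgroup.mem_center_iff]
  intro n
  have hn := congrArg (fun σ : MulAut N => σ (b⁻¹ * n * b)) h
  simp only [MulAut.conj_apply] at hn
  calc n * (a * b⁻¹) = a * (b⁻¹ * n * b) * a⁻¹ * (a * b⁻¹) := by rw [hn]; group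
    _ = a * b⁻¹ * n := by group

lemma twisted_cocycle_mul_inv {N R : Type*} [Group N] [Group R] {δ : R → MulAut N}
    {f f' : R → R → N} (hc : ∀ r1 r2, f' r1 r2 * (f r1 r2)⁻¹ ∈ Subgroup.center N)
    (hf : ∀ r1 r2 r3, f r1 r2 * f (r1 * r2) r3 = δ r1 (f r2 r3) * f r1 (r2 * r3))
    (hf' : ∀ r1 r2 r3, f' r1 r2 * f' (r1 * r2) r3 = δ r1 (f' r2 r3) * f' r1 (r2 * r3))
    (r1 r2 r3 : R) :
    f' r1 r2 * (f r1 r2)⁻¹ * (f' (r1 * r2) r3 * (f (r1 * r2) r3)⁻¹)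
      = δ r1 (f' r2 r3 * (f r2 r3)⁻¹) * (f' r1 (r2 * r3) * (f r1 (r2 * r3))⁻¹) := by
  set c : R → R → N := fun a b => f' a b * (f a b)⁻¹
  have hf'c : ∀ a b, f' a b = c a b * f a b := fun a b => by simp [c]
  have hcomm : ∀ a b x, x * c a b = c a b * x := fun a b => Subgroup.mem_center_iff.mp (hc a b)
  apply mul_right_cancel (b := f r1 r2 * f (r1 * r2) r3)
  calc c r1 r2 * c (r1 * r2) r3 * (f r1 r2 * f (r1 * r2) r3)
      = c r1 r2 * f r1 r2 * (c (r1 * r2) r3 * f (r1 * r2) r3) := by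
        rw [mul_assoc (c r1 r2), ← mul_assoc (c _ r3), ← hcomm _ _ (f r1 r2)]; group
    _ = δ r1 (c r2 r3 * f r2 r3) * (c r1 (r2 * r3) * f r1 (r2 * r3)) := by
        rw [← hf'c, ← hf'c, hf', hf'c, hf'c]
    _ = δ r1 (c r2 r3) * c r1 (r2 * r3) * (f r1 r2 * f (r1 * r2) r3) := by
        rw [hf, map_mul, mul_assoc (δ r1 (c r2 r3)), ← mul_assoc (δ r1 (f r2 r3)), hcomm]
        group

lemma exists_center_preimage {K N : Type*} [Group K] [Group N] {i0 : K →* N}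
    (hi0 : Injective i0) {c : N} (hc : c ∈ Subgroup.center N) (hcK : c ∈ i0.range) :
    ∃ z : Subgroup.center K, i0 z = c := by
  obtain ⟨k, rfl⟩ := hcK
  refine ⟨⟨k, Subgroup.mem_center_iff.mpr fun g => hi0 ?_⟩, rfl⟩
  simpa using Subgroup.mem_center_iff.mp hc (i0 g)

section OuterAction

variable {K P Q R G : Type*} [Group K] [Group P] [Group Q] [Group R] [Group G]

lemma exists_mulAut_conj {i : K →* G} (hi : Injective i) [i.range.Normal] (g : G) :
    ∃ κ : MulAut K, ∀ k, i (κ k) = g * i k * g⁻¹ := by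
  let e := MonoidHom.ofInjective hi
  refine ⟨e.trans ((MulAut.conjNormal g).trans e.symm), fun k => ?_⟩
  simp [e, MonoidHom.ofInjective_apply]

lemma outCenter_apply_eq_conj {i : K →* G} {π : G →* Q} {θ : Q →* Out K}
    (hi : Injective i) (hker : i.range = π.ker)
    (hθ : ∀ (g : G) (κ : MulAut K), (∀ k, i (κ k) = g * i k * g⁻¹) → θ (π g) = toOut K κ)
    (g : G) (z : Subgroup.center K) : i (outCenter K (θ (π g)) z) = g * i z * g⁻¹ := by
  have : i.range.Normal := hker ▸ π.normal_ker
  obtain ⟨κ, hκ⟩ := exists_mulAut_conj hi g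
  rw [hθ g κ hκ]
  exact hκ z

lemma outCenter_eq_of_fb_eq {θ : Q →* Out K} {jb : P →* Q} {fb : Q →* R}
    (hker1 : jb.range = fb.ker) {z : Subgroup.center K}
    (hz : ∀ p, outCenter K (θ (jb p)) z = z) {q1 q2 : Q} (h : fb q1 = fb q2) :
    outCenter K (θ q1) z = outCenter K (θ q2) z := by
  obtain ⟨p, hp⟩ : q2⁻¹ * q1 ∈ jb.range := by rw [hker1, MonoidHom.mem_ker]; simp [h]
  rw [← mul_inv_cancel_left q2 q1, ← hp, map_mul, map_mul, MulAut.mul_apply, hz]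

end OuterAction

structure IsSectionedExt {N P Q R G : Type*} [Group N] [Group P] [Group Q] [Group R] [Group G]
    (π0 : N →* P) (jb : P →* Q) (fb : Q →* R) (ub : R → Q) (δ : R → MulAut N)
    (j : N →* G) (π : G →* Q) (u : R → G) : Prop where
  injective : Injective j
  map_j : ∀ n, π (j n) = jb (π0 n)
  range_eq_ker : j.range = (fb.comp π).ker
  map_u : ∀ r, π (u r) = ub r
  u_one : u 1 = 1
  conj_u : ∀ r n, j (δ r n) = u r * j n * (u r)⁻¹

namespace IsSectionedExt

variable {K N P Q R G G' : Type*} [Group K] [Group N] [Group P] [Group Q] [Group R] [Group G]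
  [Group G'] {i0 : K →* N} {π0 : N →* P} {jb : P →* Q} {fb : Q →* R} {ub : R → Q}
  {δ : R → MulAut N} {j : N →* G} {π : G →* Q} {u : R → G} {j' : N →* G'} {π' : G' →* Q}
  {u' : R → G'} {f f' : R → R → N} {d : R → R → Subgroup.center K}
  (hG : IsSectionedExt π0 jb fb ub δ j π u)
include hG

lemma fb_map_j (n : N) : fb (π (j n)) = 1 :=
  (hG.range_eq_ker ▸ ⟨n, rfl⟩ : j n ∈ (fb.comp π).ker)

lemma fb_map_u (hub : ∀ r, fb (ub r) = r) (r : R) : fb (π (u r)) = r := by rw [hG.map_u, hub]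

lemma fb_map_mul_u (hub : ∀ r, fb (ub r) = r) (n : N) (r : R) : fb (π (j n * u r)) = r := by
  rw [map_mul, map_mul, hG.fb_map_j, hG.fb_map_u hub, one_mul]

lemma mul_u_inv_mem_range (hub : ∀ r, fb (ub r) = r) (g : G) : g * (u (fb (π g)))⁻¹ ∈ j.range := by
  rw [hG.range_eq_ker, MonoidHom.mem_ker]
  simp [hG.fb_map_u hub]

lemma bijective_mul_u (hub : ∀ r, fb (ub r) = r) : Bijective (fun x : N × R => j x.1 * u x.2) := by
  refine ⟨fun ⟨n1, r1⟩ ⟨n2, r2⟩ h => ?_, fun g => ?_⟩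
  · obtain rfl : r1 = r2 := by
      rw [← hG.fb_map_mul_u hub n1 r1, ← hG.fb_map_mul_u hub n2 r2]
      exact congrArg (fb ∘ π) h
    exact Prod.ext (hG.injective (mul_right_cancel h)) rfl
  · obtain ⟨n, hn⟩ := hG.mul_u_inv_mem_range hub g
    exact ⟨(n, fb (π g)), by simp [hn]⟩

lemma exists_factorSet (hub : ∀ r, fb (ub r) = r) :
    ∃ f : R → R → N, ∀ r1 r2, u r1 * u r2 = j (f r1 r2) * u (r1 * r2) := by
  have h r1 r2 : u r1 * u r2 * (u (r1 * r2))⁻¹ ∈ j.range := by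
    simpa [hG.fb_map_u hub] using hG.mul_u_inv_mem_range hub (u r1 * u r2)
  choose f hf using h
  exact ⟨f, fun r1 r2 => by rw [hf, inv_mul_cancel_right]⟩

lemma mD_j_left (hd : ∀ r, d 1 r = 1) (n : N) (g : G) : mD i0 j π fb d (j n) g = j n * g := by
  simp [mD, hG.fb_map_j, hd]

lemma mD_j_right (hd : ∀ r, d r 1 = 1) (g : G) (n : N) : mD i0 j π fb d g (j n) = g * j n := by
  simp [mD, hG.fb_map_j, hd]

lemma mD_mul_u (hub : ∀ r, fb (ub r) = r)
    (hf : ∀ r1 r2, u r1 * u r2 = j (f r1 r2) * u (r1 * r2)) (n1 n2 : N) (r1 r2 : R) :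
    mD i0 j π fb d (j n1 * u r1) (j n2 * u r2)
      = j (i0 (d r1 r2) * (n1 * δ r1 n2 * f r1 r2)) * u (r1 * r2) := by
  rw [mD, mul_assoc, hG.fb_map_mul_u hub, hG.fb_map_mul_u hub,
    mul_section_mul_section hG.conj_u hf, ← mul_assoc, MonoidHom.comp_apply, ← map_mul]

theorem cocycle_eq_of_mD_iso (hub : ∀ r, fb (ub r) = r) (hi0 : Injective i0)
    {d1 d2 : R → R → Subgroup.center K} (hd1 : ∀ r, d1 1 r = 1) (hd2 : ∀ r, d2 1 r = 1)
    {ψ : G → G} (hψ : ∀ g1 g2, ψ (mD i0 j π fb d1 g1 g2) = mD i0 j π fb d2 (ψ g1) (ψ g2))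
    (hψj : ∀ n, ψ (j n) = j n) (hψu : ∀ r, ψ (u r) = u r) : d1 = d2 := by
  obtain ⟨f, hf⟩ := hG.exists_factorSet hub
  have hψj_mul (n : N) (g : G) : ψ (j n * g) = j n * ψ g := by
    rw [← hG.mD_j_left hd1, hψ, hψj, hG.mD_j_left hd2]
  funext r1 r2
  have key := hψ (u r1) (u r2)
  simp only [mD, MonoidHom.comp_apply, hψu, hG.fb_map_u hub, mul_assoc, hψj_mul, hf] at key
  exact Subtype.ext (hi0 (hG.injective (mul_right_cancel key)))

lemma map_factorSet (hf : ∀ r1 r2, u r1 * u r2 = j (f r1 r2) * u (r1 * r2)) (r1 r2 : R) :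
    jb (π0 (f r1 r2)) = ub r1 * ub r2 * (ub (r1 * r2))⁻¹ := by
  rw [← hG.map_j, eq_mul_inv_of_mul_eq (hf r1 r2).symm]
  simp [hG.map_u]

theorem isZ2R_of_twisted_cocycle {θ : Q →* Out K} (hub : ∀ r, fb (ub r) = r)
    (hi0 : Injective i0) (hπ0 : Surjective π0) (hker1 : jb.range = fb.ker)
    (hθ : ∀ g z, j (i0 (outCenter K (θ (π g)) z)) = g * j (i0 z) * g⁻¹)
    (hd1 : ∀ r, d 1 r = 1 ∧ d r 1 = 1)
    (hcent : ∀ r1 r2, i0 (d r1 r2) ∈ Subgroup.center N)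
    (hcoc : ∀ r1 r2 r3,
      i0 (d r1 r2) * i0 (d (r1 * r2) r3) = δ r1 (i0 (d r2 r3)) * i0 (d r1 (r2 * r3))) :
    IsZ2R θ jb fb d := by
  have hfix r1 r2 p : outCenter K (θ (jb p)) (d r1 r2) = d r1 r2 := by
    obtain ⟨n, rfl⟩ := hπ0 p
    refine Subtype.ext (hi0 (hG.injective ?_))
    rw [← hG.map_j, hθ, ← map_mul, ← map_inv, ← map_mul,
      Subgroup.mem_center_iff.mp (hcent r1 r2), mul_inv_cancel_right]
  refine ⟨hd1, hfix, fun q1 r2 r3 => Subtype.ext (hi0 ?_)⟩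
  have hact : i0 (outCenter K (θ q1) (d r2 r3)) = δ (fb q1) (i0 (d r2 r3)) := by
    rw [outCenter_eq_of_fb_eq hker1 (hfix r2 r3) (hG.fb_map_u hub (fb q1)).symm]
    exact hG.injective (by rw [hθ, hG.conj_u])
  simp only [Subgroup.coe_mul, map_mul, hact, hcoc]

variable (hG' : IsSectionedExt π0 jb fb ub δ j' π' u')
  (hf : ∀ r1 r2, u r1 * u r2 = j (f r1 r2) * u (r1 * r2))
  (hf' : ∀ r1 r2, u' r1 * u' r2 = j' (f' r1 r2) * u' (r1 * r2))
include hG' hf hf'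

lemma factorSet_mul_inv_mem_center (r1 r2 : R) :
    f' r1 r2 * (f r1 r2)⁻¹ ∈ Subgroup.center N :=
  mul_inv_mem_center_of_conj_eq <| by
    rw [conj_factorSet hG'.conj_u hf' hG'.injective, conj_factorSet hG.conj_u hf hG.injective]

theorem exists_cocycle_eq_factorSet_mul_inv {θ : Q →* Out K} (hub : ∀ r, fb (ub r) = r)
    (hi0 : Injective i0) (hπ0 : Surjective π0) (hker0 : i0.range = π0.ker)
    (hjb : Injective jb) (hker1 : jb.range = fb.ker)
    (hθ : ∀ g z, j (i0 (outCenter K (θ (π g)) z)) = g * j (i0 z) * g⁻¹) :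
    ∃ d : R → R → Subgroup.center K, IsZ2R θ jb fb d ∧
      ∀ r1 r2, i0 (d r1 r2) = f' r1 r2 * (f r1 r2)⁻¹ := by
  have hcent := hG.factorSet_mul_inv_mem_center hG' hf hf'
  have hrange r1 r2 : f' r1 r2 * (f r1 r2)⁻¹ ∈ i0.range := by
    rw [hker0, MonoidHom.mem_ker, map_mul, map_inv, mul_inv_eq_one]
    exact hjb (by rw [hG.map_factorSet hf, hG'.map_factorSet hf'])
  choose d hd using fun r1 r2 => exists_center_preimage hi0 (hcent r1 r2) (hrange r1 r2)
  have hone (r : R) : d 1 r = 1 ∧ d r 1 = 1 := by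
    simp [Subtype.ext_iff, ← hi0.eq_iff, hd, factorSet_one_left hG.injective hG.u_one hf,
      factorSet_one_right hG.injective hG.u_one hf, factorSet_one_left hG'.injective hG'.u_one hf',
      factorSet_one_right hG'.injective hG'.u_one hf']
  refine ⟨d, hG.isZ2R_of_twisted_cocycle hub hi0 hπ0 hker1 hθ hone (by simpa [hd]) ?_, hd⟩
  simpa only [hd] using twisted_cocycle_mul_inv hcent
    (factorSet_cocycle hG.conj_u hf hG.injective) (factorSet_cocycle hG'.conj_u hf' hG'.injective)

theorem exists_mD_iso (hub : ∀ r, fb (ub r) = r)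
    (hd : ∀ r1 r2, i0 (d r1 r2) = f' r1 r2 * (f r1 r2)⁻¹) :
    ∃ ψ : G → G', Bijective ψ ∧
      (∀ g1 g2 : G, ψ (mD i0 j π fb d g1 g2) = ψ g1 * ψ g2) ∧
      (∀ n : N, ψ (j n) = j' n) ∧ (∀ g : G, π' (ψ g) = π g) ∧ (∀ r : R, ψ (u r) = u' r) := by
  let e := Equiv.ofBijective _ (hG.bijective_mul_u hub)
  let e' := Equiv.ofBijective _ (hG'.bijective_mul_u hub)
  have hψ (n : N) (r : R) : e' (e.symm (j n * u r)) = j' n * u' r := by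
    rw [show j n * u r = e (n, r) from rfl, e.symm_apply_apply]
    rfl
  refine ⟨e' ∘ e.symm, e'.bijective.comp e.symm.bijective, fun g1 g2 => ?_,
    fun n => by simpa [hG.u_one, hG'.u_one] using hψ n 1, fun g => ?_,
    fun r => by simpa using hψ 1 r⟩
  · obtain ⟨⟨n1, r1⟩, rfl⟩ := e.surjective g1
    obtain ⟨⟨n2, r2⟩, rfl⟩ := e.surjective g2
    have hcomm := Subgroup.mem_center_iff.mp (hG.factorSet_mul_inv_mem_center hG' hf hf' r1 r2)
    have key : f' r1 r2 * (f r1 r2)⁻¹ * (n1 * δ r1 n2 * f r1 r2) = n1 * δ r1 n2 * f' r1 r2 := by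
      rw [← mul_assoc, ← hcomm]
      group
    simp only [comp_apply, e, Equiv.ofBijective_apply, hG.mD_mul_u hub hf, hψ,
      mul_section_mul_section hG'.conj_u hf', hd, key]
  · obtain ⟨⟨n, r⟩, rfl⟩ := e.surjective g
    simp only [comp_apply, e, Equiv.ofBijective_apply, hψ, map_mul, hG.map_j, hG'.map_j,
      hG.map_u, hG'.map_u]

end IsSectionedExt

theorem statement14_general
    {K P Q R N G : Type*} [Group K] [Group P] [Group Q] [Group R] [Group N] [Group G]
    (i0 : K →* N) (π0 : N →* P) (jb : P →* Q) (fb : Q →* R)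
    (j : N →* G) (π : G →* Q) (θ : Q →* Out K)
    (hi0 : Function.Injective i0) (hπ0 : Function.Surjective π0)
    (hker0 : i0.range = π0.ker)
    (hjb : Function.Injective jb)
    (hker1 : jb.range = fb.ker)
    (hj : Function.Injective j)
    (hcomm : π.comp j = jb.comp π0)
    (hkerφ : j.range = (fb.comp π).ker)
    (hkerπ : (j.comp i0).range = π.ker)
    (hθ : ∀ (g : G) (κ : MulAut K),
      (∀ k, (j.comp i0) (κ k) = g * (j.comp i0) k * g⁻¹) → θ (π g) = toOut K κ)
    (ub : R → Q) (hub : ∀ r, fb (ub r) = r)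
    (Δ : R → ↥(autK i0))
    (u : R → G) (hπu : ∀ r, π (u r) = ub r) (hu1 : u 1 = 1)
    (hconj : ∀ (r : R) (n : N), j ((Δ r : MulAut N) n) = u r * j n * (u r)⁻¹) :
    -- well-definedness: for each 2-cocycle d, `(d⊠G,j,π,u)` is again a
    -- (ū,Δ)-sectioned iterated extension
    (∀ d : R → R → ↥(Subgroup.center K), IsZ2R θ jb fb d →
      (∀ n1 n2 : N, mD i0 j π fb d (j n1) (j n2) = j (n1 * n2)) ∧
      (∀ g1 g2 : G, π (mD i0 j π fb d g1 g2) = π g1 * π g2) ∧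
      (∀ (r : R) (n : N), mD i0 j π fb d (u r) (j n) =
        mD i0 j π fb d (j ((Δ r : MulAut N) n)) (u r))) ∧
    -- injectivity: isomorphic twists come from equal cocycles
    (∀ d1 d2 : R → R → ↥(Subgroup.center K), IsZ2R θ jb fb d1 → IsZ2R θ jb fb d2 →
      (∃ ψ : G → G, Function.Bijective ψ ∧
        (∀ g1 g2 : G, ψ (mD i0 j π fb d1 g1 g2) = mD i0 j π fb d2 (ψ g1) (ψ g2)) ∧
        (∀ n : N, ψ (j n) = j n) ∧ (∀ g : G, π (ψ g) = π g) ∧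
        (∀ r : R, ψ (u r) = u r)) →
      d1 = d2) ∧
    -- surjectivity, with the inverse given by the difference of the factor sets
    (∀ (G' : Type*) (_ : Group G') (j' : N →* G') (π' : G' →* Q) (u' : R → G'),
      Function.Injective j' → Function.Surjective π' →
      π'.comp j' = jb.comp π0 →
      j'.range = (fb.comp π').ker →
      (j'.comp i0).range = π'.ker →
      (∀ r, π' (u' r) = ub r) → u' 1 = 1 →
      (∀ (r : R) (n : N), j' ((Δ r : MulAut N) n) = u' r * j' n * (u' r)⁻¹) →
      ∀ f f' : R → R → N,
        (∀ r1 r2 : R, u r1 * u r2 = j (f r1 r2) * u (r1 * r2)) →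
        (∀ r1 r2 : R, u' r1 * u' r2 = j' (f' r1 r2) * u' (r1 * r2)) →
        ∃ d : R → R → ↥(Subgroup.center K), IsZ2R θ jb fb d ∧
          (∀ r1 r2 : R, i0 (d r1 r2 : K) = f' r1 r2 * (f r1 r2)⁻¹) ∧
          ∃ ψ : G → G', Function.Bijective ψ ∧
            (∀ g1 g2 : G, ψ (mD i0 j π fb d g1 g2) = ψ g1 * ψ g2) ∧
            (∀ n : N, ψ (j n) = j' n) ∧ (∀ g : G, π' (ψ g) = π g) ∧
            (∀ r : R, ψ (u r) = u' r)) := by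
  have hG : IsSectionedExt π0 jb fb ub (fun r => (Δ r : MulAut N)) j π u :=
    ⟨hj, fun n => DFunLike.congr_fun hcomm n, hkerφ, hπu, hu1, hconj⟩
  refine ⟨fun d hd => ⟨fun n1 n2 => ?_, fun g1 g2 => ?_, fun r n => ?_⟩,
    fun d1 d2 hd1 hd2 ⟨ψ, _, hψ, hψj, _, hψu⟩ =>
      hG.cocycle_eq_of_mD_iso hub hi0 (fun r => (hd1.1 r).1) (fun r => (hd2.1 r).1) hψ hψj hψu,
    fun G' _ j' π' u' hj' _ hcomm' hkerφ' _ hπu' hu1' hconj' f f' hf hf' => ?_⟩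
  · rw [hG.mD_j_left fun r => (hd.1 r).1, map_mul]
  · have hπi (k : K) : π (j (i0 k)) = 1 := (hkerπ ▸ ⟨k, rfl⟩ : (j.comp i0) k ∈ π.ker)
    simp [mD, hπi]
  · rw [hG.mD_j_right (fun r => (hd.1 r).2), hG.mD_j_left (fun r => (hd.1 r).1), hconj,
      inv_mul_cancel_right]
  · have hG' : IsSectionedExt π0 jb fb ub (fun r => (Δ r : MulAut N)) j' π' u' :=
      ⟨hj', fun n => DFunLike.congr_fun hcomm' n, hkerφ', hπu', hu1', hconj'⟩
    obtain ⟨d, hd, hdf⟩ := hG.exists_cocycle_eq_factorSet_mul_inv hG' hf hf' hub hi0 hπ0 hker0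
      hjb hker1 (outCenter_apply_eq_conj (i := j.comp i0) (hj.comp hi0) hkerπ hθ)
    exact ⟨d, hd, hdf, hG.exists_mD_iso hG' hf hf' hub hdf⟩

/-- For a fixed `(ū,Δ)`-sectioned iterated extension `(G,j,π,u)`,
the map `d ↦ (d⊠G,j,π,u)` is a bijection from `Z²(R,Z(K)^P)` onto the set of
isomorphism classes of `(ū,Δ)`-sectioned iterated extensions of `(KNP)` by `(PQR)`;
the inverse sends `(G',j',π',u')` to the 2-cocycle `(r₁,r₂) ↦ f'(r₁,r₂)·f(r₁,r₂)⁻¹`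
formed from the left factor sets. -/
theorem statement14
    {K P Q R N G : Type*} [Group K] [Group P] [Group Q] [Group R] [Group N] [Group G]
    (i0 : K →* N) (π0 : N →* P) (jb : P →* Q) (fb : Q →* R)
    (j : N →* G) (π : G →* Q) (θ : Q →* Out K)
    (hi0 : Function.Injective i0) (hπ0 : Function.Surjective π0)
    (hker0 : i0.range = π0.ker)
    (hjb : Function.Injective jb) (hfb : Function.Surjective fb)
    (hker1 : jb.range = fb.ker)
    (hj : Function.Injective j) (hπ : Function.Surjective π)
    (hcomm : π.comp j = jb.comp π0)
    (hkerφ : j.range = (fb.comp π).ker)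
    (hkerπ : (j.comp i0).range = π.ker)
    (hθ : ∀ (g : G) (κ : MulAut K),
      (∀ k, (j.comp i0) (κ k) = g * (j.comp i0) k * g⁻¹) → θ (π g) = toOut K κ)
    (ub : R → Q) (hub : ∀ r, fb (ub r) = r) (hub1 : ub 1 = 1)
    (Δ : R → ↥(autK i0)) (hΔ1 : Δ 1 = 1)
    (u : R → G) (hπu : ∀ r, π (u r) = ub r) (hu1 : u 1 = 1)
    (hconj : ∀ (r : R) (n : N), j ((Δ r : MulAut N) n) = u r * j n * (u r)⁻¹) :
    -- well-definedness: for each 2-cocycle d, `(d⊠G,j,π,u)` is again a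
    -- (ū,Δ)-sectioned iterated extension
    (∀ d : R → R → ↥(Subgroup.center K), IsZ2R θ jb fb d →
      (∀ n1 n2 : N, mD i0 j π fb d (j n1) (j n2) = j (n1 * n2)) ∧
      (∀ g1 g2 : G, π (mD i0 j π fb d g1 g2) = π g1 * π g2) ∧
      (∀ (r : R) (n : N), mD i0 j π fb d (u r) (j n) =
        mD i0 j π fb d (j ((Δ r : MulAut N) n)) (u r))) ∧
    -- injectivity: isomorphic twists come from equal cocycles
    (∀ d1 d2 : R → R → ↥(Subgroup.center K), IsZ2R θ jb fb d1 → IsZ2R θ jb fb d2 →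
      (∃ ψ : G → G, Function.Bijective ψ ∧
        (∀ g1 g2 : G, ψ (mD i0 j π fb d1 g1 g2) = mD i0 j π fb d2 (ψ g1) (ψ g2)) ∧
        (∀ n : N, ψ (j n) = j n) ∧ (∀ g : G, π (ψ g) = π g) ∧
        (∀ r : R, ψ (u r) = u r)) →
      d1 = d2) ∧
    -- surjectivity, with the inverse given by the difference of the factor sets
    (∀ (G' : Type*) (_ : Group G') (j' : N →* G') (π' : G' →* Q) (u' : R → G'),
      Function.Injective j' → Function.Surjective π' →
      π'.comp j' = jb.comp π0 →
      j'.range = (fb.comp π').ker →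
      (j'.comp i0).range = π'.ker →
      (∀ r, π' (u' r) = ub r) → u' 1 = 1 →
      (∀ (r : R) (n : N), j' ((Δ r : MulAut N) n) = u' r * j' n * (u' r)⁻¹) →
      ∀ f f' : R → R → N,
        (∀ r1 r2 : R, u r1 * u r2 = j (f r1 r2) * u (r1 * r2)) →
        (∀ r1 r2 : R, u' r1 * u' r2 = j' (f' r1 r2) * u' (r1 * r2)) →
        ∃ d : R → R → ↥(Subgroup.center K), IsZ2R θ jb fb d ∧
          (∀ r1 r2 : R, i0 (d r1 r2 : K) = f' r1 r2 * (f r1 r2)⁻¹) ∧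
          ∃ ψ : G → G', Function.Bijective ψ ∧
            (∀ g1 g2 : G, ψ (mD i0 j π fb d g1 g2) = ψ g1 * ψ g2) ∧
            (∀ n : N, ψ (j n) = j' n) ∧ (∀ g : G, π' (ψ g) = π g) ∧
            (∀ r : R, ψ (u r) = u' r)) :=
  statement14_general i0 π0 jb fb j π θ hi0 hπ0 hker0 hjb hker1 hj hcomm hkerφ hkerπ hθ ub hub Δ u
    hπu hu1 hconj

end IES
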